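/- For a positive integer n, there exists a connected simple graph of order n whose three metric subgraphs (central, annular, and peripheral subgraphs) are each isomorphic to a cycle C_m for some m ≥ 3 if and only if n ≥ 15. -/

import Mathlib

/-- Eccentricity of a vertex in a (finite connected) simple graph:
the maximum distance from `v` to any vertex. -/
noncomputable def SimpleGraph.mecc {V : Type*} (G : SimpleGraph V) (v : V) : ℕ :=
  sSup (Set.range (G.dist v))

/-- Radius: the minimum eccentricity. -/
noncomputable def SimpleGraph.mrad {V : Type*} (G : SimpleGraph V) : ℕ :=
  sInf (Set.range G.mecc)

/-- Diameter: the maximum eccentricity. -/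
noncomputable def SimpleGraph.mdiam {V : Type*} (G : SimpleGraph V) : ℕ :=
  sSup (Set.range G.mecc)

/-- The center: the set of vertices of minimum eccentricity. -/
noncomputable def SimpleGraph.mcenter {V : Type*} (G : SimpleGraph V) : Set V :=
  {v | G.mecc v = G.mrad}

/-- The annulus: the set of vertices of intermediate eccentricity. -/
noncomputable def SimpleGraph.mannulus {V : Type*} (G : SimpleGraph V) : Set V :=
  {v | G.mrad < G.mecc v ∧ G.mecc v < G.mdiam}

/-- The periphery: the set of vertices of maximum eccentricity. -/
noncomputable def SimpleGraph.mperiphery {V : Type*} (G : SimpleGraph V) : Set V :=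
  {v | G.mecc v = G.mdiam}

/-- All three metric subgraphs are cycles. -/
noncomputable def metricSubgraphsAreCycles {V : Type*} (G : SimpleGraph V) : Prop :=
  (∃ m : ℕ, 3 ≤ m ∧ Nonempty (G.induce G.mcenter ≃g SimpleGraph.cycleGraph m)) ∧
  (∃ m : ℕ, 3 ≤ m ∧ Nonempty (G.induce G.mannulus ≃g SimpleGraph.cycleGraph m)) ∧
  (∃ m : ℕ, 3 ≤ m ∧ Nonempty (G.induce G.mperiphery ≃g SimpleGraph.cycleGraph m))

/-!
Lower bound. A central vertex shows diam ≤ 2 rad, and a nonempty annulus forces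
diam ≥ rad + 2, hence diam ≥ 4. Two peripheral vertices at distance diam lie on the
peripheral cycle, so its length is at least 2 diam ≥ 8. If diam = 4 = 2 rad, the first
step of a geodesic from a peripheral vertex to a central one lands in the annulus, so
diam ≤ 2 + ⌊b / 2⌋ for an annular `b`-cycle and `b ≥ 4`. Either way `n ≥ 15`.

Construction. Join `C_a` (`a ≥ 3`) completely to `C_4 = w₀ … w₃` and attach
`C_8 = p₀ … p₇` by `p_k ~ w_{k / 2}`. The eccentricities are 2, 3, 4 on the three cycles;
the lower bounds come from closed forms of the distances from the `p_s`, which only need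
to be checked to change by at most one along each edge.
-/

namespace SimpleGraph

variable {V W : Type*} {G : SimpleGraph V} {G' : SimpleGraph W} {u v : V}

theorem Hom.edist_le (f : G →g G') (u v : V) : G'.edist (f u) (f v) ≤ G.edist u v := by
  by_cases h : G.Reachable u v
  · obtain ⟨p, hp⟩ := h.exists_walk_length_eq_edist
    exact hp ▸ (p.length_map f) ▸ SimpleGraph.edist_le (p.map f)
  · rw [edist_eq_top_of_not_reachable h]
    exact le_top

theorem Hom.dist_le (f : G →g G') (h : G.Reachable u v) : G'.dist (f u) (f v) ≤ G.dist u v :=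
  ENat.toNat_le_toNat (f.edist_le u v) (edist_ne_top_iff_reachable.mpr h)

theorem Iso.dist_eq (e : G ≃g G') (u v : V) : G'.dist (e u) (e v) = G.dist u v := by
  have h : G.edist u v ≤ G'.edist (e u) (e v) := by
    simpa using e.symm.toHom.edist_le (e u) (e v)
  exact congrArg ENat.toNat (le_antisymm (e.toHom.edist_le u v) h)

open Fin.NatCast Fin.CommRing in
theorem cycleGraph_dist_add_le {m : ℕ} (i : Fin (m + 2)) (k : ℕ) :
    (cycleGraph (m + 2)).dist i (i + k) ≤ k := by
  induction k with
  | zero => simp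
  | succ k ih =>
    have hadj : (cycleGraph (m + 2)).Adj (i + k) (i + (k + 1 : ℕ)) := by
      rw [cycleGraph_adj]; right; push_cast; ring
    have h := (cycleGraph_connected (n := m + 1)).dist_triangle (u := i) (v := i + k)
      (w := i + (k + 1 : ℕ))
    rw [dist_eq_one_iff_adj.mpr hadj] at h
    exact h.trans (Nat.add_le_add_right ih 1)

open Fin.NatCast in
theorem cycleGraph_dist_le (m : ℕ) (i j : Fin m) : (cycleGraph m).dist i j ≤ m / 2 := by
  match m, i, j with
  | 0, i, _ => exact i.elim0
  | 1, i, j => simp [Fin.fin_one_eq_zero i, Fin.fin_one_eq_zero j]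
  | m + 2, i, j =>
    have hij := cycleGraph_dist_add_le i (j - i).val
    have hji := cycleGraph_dist_add_le j (i - j).val
    simp only [Fin.cast_val_eq_self, add_sub_cancel] at hij hji
    rw [dist_comm] at hji
    rcases lt_trichotomy i j with h | rfl | h
    · have := Fin.coe_sub_iff_le.mpr h.le
      have := Fin.coe_sub_iff_lt.mpr h
      omega
    · simp
    · have := Fin.coe_sub_iff_le.mpr h.le
      have := Fin.coe_sub_iff_lt.mpr h
      omega

theorem dist_le_of_induce_iso_cycleGraph {s : Set V} {m : ℕ} (e : G.induce s ≃g cycleGraph m)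
    (hu : u ∈ s) (hv : v ∈ s) : G.dist u v ≤ m / 2 := by
  have hreach : (G.induce s).Reachable ⟨u, hu⟩ ⟨v, hv⟩ :=
    e.preconnected_iff.mpr cycleGraph_preconnected _ _
  calc G.dist u v ≤ (G.induce s).dist ⟨u, hu⟩ ⟨v, hv⟩ :=
        (Embedding.induce s).toHom.dist_le hreach
    _ = (cycleGraph m).dist (e ⟨u, hu⟩) (e ⟨v, hv⟩) := (e.dist_eq _ _).symm
    _ ≤ m / 2 := cycleGraph_dist_le m _ _

theorem mecc_le {k : ℕ} (h : ∀ u, G.dist v u ≤ k) : G.mecc v ≤ k :=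
  csSup_le ⟨_, Set.mem_range_self v⟩ (Set.forall_mem_range.mpr h)

theorem mrad_le_mecc (v : V) : G.mrad ≤ G.mecc v := Nat.sInf_le (Set.mem_range_self v)

theorem exists_mecc_eq_mrad [Nonempty V] : ∃ v, G.mecc v = G.mrad :=
  Nat.sInf_mem (Set.range_nonempty _)

theorem mrad_eq {k : ℕ} (hv : G.mecc v = k) (h : ∀ u, k ≤ G.mecc u) : G.mrad = k :=
  le_antisymm (hv ▸ G.mrad_le_mecc v)
    (le_csInf ⟨_, Set.mem_range_self v⟩ (Set.forall_mem_range.mpr h))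

section Finite

variable [Finite V]

theorem dist_le_mecc (v u : V) : G.dist v u ≤ G.mecc v :=
  le_csSup (Set.finite_range _).bddAbove (Set.mem_range_self u)

theorem exists_dist_eq_mecc (v : V) : ∃ u, G.dist v u = G.mecc v :=
  Nat.sSup_mem ⟨_, Set.mem_range_self v⟩ (Set.finite_range _).bddAbove

theorem mecc_le_mdiam (v : V) : G.mecc v ≤ G.mdiam :=
  le_csSup (Set.finite_range _).bddAbove (Set.mem_range_self v)

theorem exists_mecc_eq_mdiam [Nonempty V] : ∃ v, G.mecc v = G.mdiam :=
  Nat.sSup_mem (Set.range_nonempty _) (Set.finite_range _).bddAbove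

theorem mdiam_eq {k : ℕ} (hv : G.mecc v = k) (h : ∀ u, G.mecc u ≤ k) : G.mdiam = k :=
  le_antisymm (csSup_le ⟨_, Set.mem_range_self v⟩ (Set.forall_mem_range.mpr h))
    (hv ▸ G.mecc_le_mdiam v)

theorem Connected.mecc_le_mecc_add_dist (hc : G.Connected) (u v : V) :
    G.mecc u ≤ G.mecc v + G.dist u v :=
  mecc_le fun w => by
    have := hc.dist_triangle (u := u) (v := v) (w := w)
    have := G.dist_le_mecc v w
    omega

end Finite

theorem Iso.mecc_eq (e : G ≃g G') (v : V) : G'.mecc (e v) = G.mecc v := by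
  have : G'.dist (e v) ∘ e = G.dist v := funext (e.dist_eq v)
  rw [mecc, mecc, ← this, e.surjective.range_comp]

theorem Iso.range_mecc (e : G ≃g G') : Set.range G'.mecc = Set.range G.mecc := by
  rw [← e.surjective.range_comp, ← funext e.mecc_eq]; rfl

theorem Iso.mrad_eq (e : G ≃g G') : G'.mrad = G.mrad := by rw [mrad, mrad, e.range_mecc]

theorem Iso.mdiam_eq (e : G ≃g G') : G'.mdiam = G.mdiam := by rw [mdiam, mdiam, e.range_mecc]

theorem Iso.exists_induce_iso_cycleGraph (e : G ≃g G') {s : Set V} {t : Set W}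
    (h : ∀ v, e v ∈ t ↔ v ∈ s) :
    (∃ m, 3 ≤ m ∧ Nonempty (G.induce s ≃g cycleGraph m)) →
      ∃ m, 3 ≤ m ∧ Nonempty (G'.induce t ≃g cycleGraph m) := by
  rintro ⟨m, hm, ⟨f⟩⟩
  exact ⟨m, hm, ⟨f.comp (e.induce (e.toEquiv.bijOn h)).symm⟩⟩

theorem Iso.metricSubgraphsAreCycles (e : G ≃g G') (h : metricSubgraphsAreCycles G) :
    metricSubgraphsAreCycles G' := by
  obtain ⟨hC, hA, hP⟩ := h
  refine ⟨e.exists_induce_iso_cycleGraph (fun v => ?_) hC,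
    e.exists_induce_iso_cycleGraph (fun v => ?_) hA,
    e.exists_induce_iso_cycleGraph (fun v => ?_) hP⟩ <;>
  simp only [mcenter, mannulus, mperiphery, Set.mem_ofPred_eq, e.mecc_eq, e.mrad_eq, e.mdiam_eq]

section LowerBound

variable [Finite V]

theorem Connected.mdiam_le_two_mul_mrad (hc : G.Connected) : G.mdiam ≤ 2 * G.mrad := by
  have := hc.nonempty
  obtain ⟨c, hc_rad⟩ := G.exists_mecc_eq_mrad
  obtain ⟨u, hu⟩ := G.exists_mecc_eq_mdiam
  obtain ⟨v, huv⟩ := G.exists_dist_eq_mecc u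
  calc G.mdiam = G.dist u v := by rw [huv, hu]
    _ ≤ G.dist u c + G.dist c v := hc.dist_triangle
    _ ≤ G.mecc c + G.mecc c := add_le_add (dist_comm ▸ G.dist_le_mecc c u) (G.dist_le_mecc c v)
    _ = 2 * G.mrad := by rw [hc_rad]; ring

theorem exists_mem_mperiphery_dist_eq_mdiam [Nonempty V] :
    ∃ u ∈ G.mperiphery, ∃ v ∈ G.mperiphery, G.dist u v = G.mdiam := by
  obtain ⟨u, hu⟩ := G.exists_mecc_eq_mdiam
  obtain ⟨v, huv⟩ := G.exists_dist_eq_mecc u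
  refine ⟨u, hu, v, le_antisymm (G.mecc_le_mdiam v) ?_, huv.trans hu⟩
  calc G.mdiam = G.dist v u := by rw [dist_comm, huv, hu]
    _ ≤ G.mecc v := G.dist_le_mecc v u

theorem Connected.exists_adj_mem_mannulus (hc : G.Connected) (hd : G.mdiam = 2 * G.mrad)
    (hr : 2 ≤ G.mrad) {z : V} (hz : z ∈ G.mperiphery) : ∃ y ∈ G.mannulus, G.Adj z y := by
  have := hc.nonempty
  obtain ⟨c, hc_rad⟩ := G.exists_mecc_eq_mrad
  have hzc := hc.mecc_le_mecc_add_dist z c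
  have hcz := G.dist_le_mecc c z
  rw [dist_comm] at hcz
  obtain ⟨p, hp⟩ := hc.exists_walk_length_eq_dist z c
  cases p with
  | nil => simp only [mperiphery, Set.mem_ofPred_eq] at hz; simp at hp; omega
  | cons hadj q =>
    rename_i y
    have hyc := G.dist_le q
    have hy_le := hc.mecc_le_mecc_add_dist y c
    have hy_ge := hc.mecc_le_mecc_add_dist z y
    rw [dist_eq_one_iff_adj.mpr hadj] at hy_ge
    simp only [Walk.length_cons] at hp
    simp only [mperiphery, mannulus, Set.mem_ofPred_eq] at hz ⊢
    exact ⟨y, ⟨by omega, by omega⟩, hadj⟩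

theorem Connected.mdiam_le_of_induce_mannulus_iso (hc : G.Connected) (hd : G.mdiam = 2 * G.mrad)
    (hr : 2 ≤ G.mrad) {b : ℕ} (e : G.induce G.mannulus ≃g cycleGraph b) :
    G.mdiam ≤ b / 2 + 2 := by
  have := hc.nonempty
  obtain ⟨u, hu, v, hv, huv⟩ := G.exists_mem_mperiphery_dist_eq_mdiam
  obtain ⟨x, hx, hux⟩ := hc.exists_adj_mem_mannulus hd hr hu
  obtain ⟨y, hy, hvy⟩ := hc.exists_adj_mem_mannulus hd hr hv
  have hux' : G.dist u x = 1 := dist_eq_one_iff_adj.mpr hux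
  have hyv : G.dist y v = 1 := dist_comm.trans (dist_eq_one_iff_adj.mpr hvy)
  have hxy := dist_le_of_induce_iso_cycleGraph e hx hy
  calc G.mdiam = G.dist u v := huv.symm
    _ ≤ G.dist u x + G.dist x v := hc.dist_triangle
    _ ≤ G.dist u x + (G.dist x y + G.dist y v) := by gcongr; exact hc.dist_triangle
    _ ≤ b / 2 + 2 := by omega

theorem two_mul_mdiam_le_of_induce_mperiphery_iso [Nonempty V] {c : ℕ}
    (e : G.induce G.mperiphery ≃g cycleGraph c) : 2 * G.mdiam ≤ c := by
  obtain ⟨u, hu, v, hv, huv⟩ := G.exists_mem_mperiphery_dist_eq_mdiam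
  have := dist_le_of_induce_iso_cycleGraph e hu hv
  omega

theorem card_eq_card_mcenter_add_card_mannulus_add_card_mperiphery (h : G.mrad < G.mdiam) :
    Nat.card V = Nat.card G.mcenter + Nat.card G.mannulus + Nat.card G.mperiphery := by
  have hcover : G.mcenter ∪ G.mannulus ∪ G.mperiphery = Set.univ := by
    ext v
    have := G.mrad_le_mecc v
    have := G.mecc_le_mdiam v
    simp only [mcenter, mannulus, mperiphery, Set.mem_union, Set.mem_ofPred_eq, Set.mem_univ,
      iff_true]
    omega
  have hCA : Disjoint G.mcenter G.mannulus := Set.disjoint_left.mpr fun v hC hA => by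
    simp only [mcenter, mannulus, Set.mem_ofPred_eq] at hC hA; omega
  have hCAP : Disjoint (G.mcenter ∪ G.mannulus) G.mperiphery := Set.disjoint_left.mpr
    fun v hCA hP => by
      simp only [mcenter, mannulus, mperiphery, Set.mem_union, Set.mem_ofPred_eq] at hCA hP
      omega
  simp only [Nat.card_coe_set_eq]
  rw [← Set.ncard_univ, ← hcover, Set.ncard_union_eq hCAP, Set.ncard_union_eq hCA]

theorem Connected.fifteen_le_card (hc : G.Connected) (h : metricSubgraphsAreCycles G) :
    15 ≤ Nat.card V := by
  have := hc.nonempty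
  obtain ⟨⟨a, ha₃, ⟨eC⟩⟩, ⟨b, hb₃, ⟨eA⟩⟩, ⟨c, hc₃, ⟨eP⟩⟩⟩ := h
  have hcardC := (Nat.card_congr eC.toEquiv).trans (Nat.card_fin a)
  have hcardA := (Nat.card_congr eA.toEquiv).trans (Nat.card_fin b)
  have hcardP := (Nat.card_congr eP.toEquiv).trans (Nat.card_fin c)
  obtain ⟨⟨w, hrad_lt, hlt_diam⟩⟩ : Nonempty G.mannulus := Nat.card_pos_iff.mp (by omega) |>.1
  have hcard := G.card_eq_card_mcenter_add_card_mannulus_add_card_mperiphery (by omega)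
  have hdr := hc.mdiam_le_two_mul_mrad
  have hdc := two_mul_mdiam_le_of_induce_mperiphery_iso eP
  have hdb := fun hd => hc.mdiam_le_of_induce_mannulus_iso hd (by omega) eA
  omega

end LowerBound

theorem Walk.apply_le_apply_add_length {φ : V → ℕ}
    (hφ : ∀ x y, G.Adj x y → φ y ≤ φ x + 1) :
    ∀ {u v : V} (p : G.Walk u v), φ v ≤ φ u + p.length
  | _, _, .nil => le_rfl
  | _, _, .cons hadj q => by
    have := hφ _ _ hadj
    have := apply_le_apply_add_length hφ q
    rw [Walk.length_cons]
    omega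

theorem Reachable.apply_le_apply_add_dist {φ : V → ℕ}
    (hφ : ∀ x y, G.Adj x y → φ y ≤ φ x + 1) (h : G.Reachable u v) :
    φ v ≤ φ u + G.dist u v := by
  obtain ⟨p, hp⟩ := h.exists_walk_length_eq_dist
  exact hp ▸ Walk.apply_le_apply_add_length hφ p

section Construction

def metricCyclesAttach (k : Fin 8) : Fin 4 := ⟨k / 2, by omega⟩

def cyclicDist {m : ℕ} (i j : Fin m) : ℕ := min (i - j).val (j - i).val

variable {a : ℕ}

/-- The center `C_a` is joined to every vertex of the annulus `C_4`; the periphery `C_8`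
hangs off the annulus through `metricCyclesAttach`. -/
def metricCyclesAdj (a : ℕ) : Fin a ⊕ Fin 4 ⊕ Fin 8 → Fin a ⊕ Fin 4 ⊕ Fin 8 → Prop
  | .inl i, .inl j => (cycleGraph a).Adj i j
  | .inl _, .inr (.inl _) | .inr (.inl _), .inl _ => True
  | .inr (.inl i), .inr (.inl j) => (cycleGraph 4).Adj i j
  | .inr (.inl i), .inr (.inr k) | .inr (.inr k), .inr (.inl i) => i = metricCyclesAttach k
  | .inr (.inr k), .inr (.inr l) => (cycleGraph 8).Adj k l
  | _, _ => False

def metricCyclesGraph (a : ℕ) : SimpleGraph (Fin a ⊕ Fin 4 ⊕ Fin 8) where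
  Adj := metricCyclesAdj a
  symm := ⟨by
    rintro (i | i | i) (j | j | j) h <;> simp only [metricCyclesAdj] at h ⊢ <;>
      first | exact h.symm | exact h⟩
  loopless := ⟨by rintro (i | i | i) h <;> simp [metricCyclesAdj] at h⟩

theorem metricCyclesGraph_exists_walk_from_inl (i : Fin a) (x : Fin a ⊕ Fin 4 ⊕ Fin 8) :
    ∃ p : (metricCyclesGraph a).Walk (.inl i) x, p.length ≤ 2 := by
  have hCA (i : Fin a) (j : Fin 4) : (metricCyclesGraph a).Adj (.inl i) (.inr (.inl j)) := trivial
  have hAP (k : Fin 8) :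
      (metricCyclesGraph a).Adj (.inr (.inl (metricCyclesAttach k))) (.inr (.inr k)) := rfl
  rcases x with j | j | k
  · exact ⟨.cons (hCA i 0) (.cons (hCA j 0).symm .nil), le_rfl⟩
  · exact ⟨.cons (hCA i j) .nil, by simp⟩
  · exact ⟨.cons (hCA i (metricCyclesAttach k)) (.cons (hAP k) .nil), le_rfl⟩

theorem metricCyclesGraph_connected [NeZero a] : (metricCyclesGraph a).Connected :=
  (connected_iff_exists_forall_reachable _).mpr
    ⟨.inl 0, fun x => (metricCyclesGraph_exists_walk_from_inl 0 x).elim fun p _ => p.reachable⟩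

/-- In closed form, the distance from periphery vertex `s`. -/
def metricCyclesPotential (s : Fin 8) : Fin a ⊕ Fin 4 ⊕ Fin 8 → ℕ
  | .inl _ => 2
  | .inr (.inl j) => cyclicDist (metricCyclesAttach s) j + 1
  | .inr (.inr k) => cyclicDist s k

theorem metricCyclesPotential_adj_le (s : Fin 8) (x y : Fin a ⊕ Fin 4 ⊕ Fin 8)
    (h : (metricCyclesGraph a).Adj x y) :
    metricCyclesPotential s y ≤ metricCyclesPotential s x + 1 := by
  have hCA : ∀ s j, cyclicDist (metricCyclesAttach s) j ≤ 2 := by decide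
  have hAA : ∀ s i j, (cycleGraph 4).Adj i j →
      cyclicDist (metricCyclesAttach s) j ≤ cyclicDist (metricCyclesAttach s) i + 1 := by
    decide
  have hAP : ∀ s k,
      cyclicDist s k ≤ cyclicDist (metricCyclesAttach s) (metricCyclesAttach k) + 2 := by
    decide
  have hPA : ∀ s k,
      cyclicDist (metricCyclesAttach s) (metricCyclesAttach k) ≤ cyclicDist s k := by
    decide
  have hPP : ∀ s k l, (cycleGraph 8).Adj k l → cyclicDist s l ≤ cyclicDist s k + 1 := by
    decide
  rcases x with i | i | k <;> rcases y with j | j | l <;>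
    simp only [metricCyclesGraph, metricCyclesAdj] at h <;>
    simp only [metricCyclesPotential]
  · omega
  · exact Nat.add_le_add_right (hCA s j) 1
  · omega
  · exact Nat.add_le_add_right (hAA s i j h) 1
  · exact h ▸ hAP s l
  · exact h ▸ Nat.add_le_add_right (hPA s k) 1
  · exact hPP s k l h

theorem metricCyclesPotential_le_dist [NeZero a] (s : Fin 8) (x : Fin a ⊕ Fin 4 ⊕ Fin 8) :
    metricCyclesPotential s x ≤ (metricCyclesGraph a).dist (.inr (.inr s)) x := by
  have := (metricCyclesGraph_connected.preconnected (.inr (.inr s)) x).apply_le_apply_add_dist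
    (metricCyclesPotential_adj_le s)
  simpa [metricCyclesPotential, cyclicDist] using this

variable [NeZero a]

theorem metricCyclesGraph_mecc_inl (i : Fin a) : (metricCyclesGraph a).mecc (.inl i) = 2 := by
  refine le_antisymm (mecc_le fun x => ?_) ?_
  · obtain ⟨p, hp⟩ := metricCyclesGraph_exists_walk_from_inl i x
    exact (dist_le p).trans hp
  · calc 2 ≤ _ := metricCyclesPotential_le_dist 0 (.inl i)
      _ = _ := dist_comm
      _ ≤ _ := dist_le_mecc _ _

theorem metricCyclesGraph_mecc_annulus (j : Fin 4) :
    (metricCyclesGraph a).mecc (.inr (.inl j)) = 3 := by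
  refine le_antisymm ?_ ?_
  · have := metricCyclesGraph_connected.mecc_le_mecc_add_dist (.inr (.inl j)) (.inl (0 : Fin a))
    rwa [metricCyclesGraph_mecc_inl, dist_eq_one_iff_adj.mpr trivial] at this
  · obtain ⟨s, hs⟩ : ∃ s, cyclicDist (metricCyclesAttach s) j = 2 := by revert j; decide
    calc 3 = metricCyclesPotential s (.inr (.inl j) : Fin a ⊕ Fin 4 ⊕ Fin 8) := by
          simp [metricCyclesPotential, hs]
      _ ≤ _ := metricCyclesPotential_le_dist s _
      _ = _ := dist_comm
      _ ≤ _ := dist_le_mecc _ _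

theorem metricCyclesGraph_mecc_periphery (k : Fin 8) :
    (metricCyclesGraph a).mecc (.inr (.inr k)) = 4 := by
  refine le_antisymm ?_ ?_
  · have := metricCyclesGraph_connected.mecc_le_mecc_add_dist (.inr (.inr k))
      (.inr (.inl (metricCyclesAttach k)) : Fin a ⊕ Fin 4 ⊕ Fin 8)
    rwa [metricCyclesGraph_mecc_annulus, dist_eq_one_iff_adj.mpr rfl] at this
  · obtain ⟨l, hl⟩ : ∃ l, cyclicDist k l = 4 := by revert k; decide
    calc 4 = metricCyclesPotential k (.inr (.inr l) : Fin a ⊕ Fin 4 ⊕ Fin 8) := hl.symm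
      _ ≤ _ := metricCyclesPotential_le_dist k _
      _ ≤ _ := dist_le_mecc _ _

theorem metricCyclesGraph_mrad : (metricCyclesGraph a).mrad = 2 :=
  mrad_eq (metricCyclesGraph_mecc_inl 0) <| by
    rintro (i | j | k) <;>
      simp [metricCyclesGraph_mecc_inl, metricCyclesGraph_mecc_annulus,
        metricCyclesGraph_mecc_periphery]

theorem metricCyclesGraph_mdiam : (metricCyclesGraph a).mdiam = 4 :=
  mdiam_eq (metricCyclesGraph_mecc_periphery 0) <| by
    rintro (i | j | k) <;>
      simp [metricCyclesGraph_mecc_inl, metricCyclesGraph_mecc_annulus,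
        metricCyclesGraph_mecc_periphery]

@[simps!]
def metricCyclesGraph.centerEmbedding : cycleGraph a ↪g metricCyclesGraph a where
  toEmbedding := .inl
  map_rel_iff' := Iff.rfl

@[simps!]
def metricCyclesGraph.annulusEmbedding : cycleGraph 4 ↪g metricCyclesGraph a where
  toEmbedding := Function.Embedding.inl.trans .inr
  map_rel_iff' := Iff.rfl

@[simps!]
def metricCyclesGraph.peripheryEmbedding : cycleGraph 8 ↪g metricCyclesGraph a where
  toEmbedding := Function.Embedding.inr.trans .inr
  map_rel_iff' := Iff.rfl

theorem metricCyclesGraph_mcenter :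
    (metricCyclesGraph a).mcenter = Set.range metricCyclesGraph.centerEmbedding := by
  ext (i | j | k) <;>
    simp [mcenter, metricCyclesGraph_mrad, metricCyclesGraph_mecc_inl,
      metricCyclesGraph_mecc_annulus, metricCyclesGraph_mecc_periphery]

theorem metricCyclesGraph_mannulus :
    (metricCyclesGraph a).mannulus = Set.range metricCyclesGraph.annulusEmbedding := by
  ext (i | j | k) <;>
    simp [mannulus, metricCyclesGraph_mrad, metricCyclesGraph_mdiam, metricCyclesGraph_mecc_inl,
      metricCyclesGraph_mecc_annulus, metricCyclesGraph_mecc_periphery]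

theorem metricCyclesGraph_mperiphery :
    (metricCyclesGraph a).mperiphery = Set.range metricCyclesGraph.peripheryEmbedding := by
  ext (i | j | k) <;>
    simp [mperiphery, metricCyclesGraph_mdiam, metricCyclesGraph_mecc_inl,
      metricCyclesGraph_mecc_annulus, metricCyclesGraph_mecc_periphery]

theorem metricCyclesGraph_metricSubgraphsAreCycles (ha : 3 ≤ a) :
    metricSubgraphsAreCycles (metricCyclesGraph a) := by
  refine ⟨⟨a, ha, ?_⟩, ⟨4, by norm_num, ?_⟩, ⟨8, by norm_num, ?_⟩⟩
  · rw [metricCyclesGraph_mcenter]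
    exact ⟨metricCyclesGraph.centerEmbedding.isoInduceRange.symm⟩
  · rw [metricCyclesGraph_mannulus]
    exact ⟨metricCyclesGraph.annulusEmbedding.isoInduceRange.symm⟩
  · rw [metricCyclesGraph_mperiphery]
    exact ⟨metricCyclesGraph.peripheryEmbedding.isoInduceRange.symm⟩

end Construction

theorem exists_connected_metricSubgraphsAreCycles {V : Type*} [Finite V] (h : 15 ≤ Nat.card V) :
    ∃ G : SimpleGraph V, G.Connected ∧ metricSubgraphsAreCycles G := by
  have : NeZero (Nat.card V - 12) := ⟨by omega⟩
  obtain ⟨e⟩ : Nonempty (V ≃ Fin (Nat.card V - 12) ⊕ Fin 4 ⊕ Fin 8) :=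
    Finite.card_eq.mp (by simp only [Nat.card_sum, Nat.card_fin]; omega)
  have f := (Iso.comap e (metricCyclesGraph _)).symm
  exact ⟨_, f.connected_iff.mp metricCyclesGraph_connected,
    f.metricSubgraphsAreCycles (metricCyclesGraph_metricSubgraphsAreCycles (by omega))⟩

end SimpleGraph

theorem exists_graph_with_cycle_metric_subgraphs_iff_general
    (n : ℕ) :
    (∃ G : SimpleGraph (Fin n), G.Connected ∧ metricSubgraphsAreCycles G) ↔ 15 ≤ n := by
  constructor
  · rintro ⟨G, hc, h⟩
    simpa using hc.fifteen_le_card h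
  · intro hn
    exact SimpleGraph.exists_connected_metricSubgraphsAreCycles (by simpa using hn)

theorem exists_graph_with_cycle_metric_subgraphs_iff
    (n : ℕ) (hn : 0 < n) :
    (∃ G : SimpleGraph (Fin n), G.Connected ∧ metricSubgraphsAreCycles G) ↔ 15 ≤ n :=
  exists_graph_with_cycle_metric_subgraphs_iff_general n
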